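/- Let λ ≥ 1. If a basis is C_ℓ-suppression quasi-greedy and Δ-(λ, RPSLC), then it is C_ℓΔ-(λ, RPGII); that is, ‖x − P_Λ(x)‖ ≤ C_ℓΔ·σ̌^Λ_m(x) for all x, m, and greedy sets Λ of x with |Λ| = ⌈λm⌉. -/

import Mathlib

open Finset Filter

noncomputable section

variable {X : Type*} [NormedAddCommGroup X] [NormedSpace ℝ X]

/-- Projection `P_A x = ∑_{n ∈ A} e_n^*(x) e_n`. -/
def proj (f : ℕ → X →L[ℝ] ℝ) (e : ℕ → X) (A : Finset ℕ) (x : X) : X :=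
  ∑ n ∈ A, f n x • e n

/-- `Λ` is a greedy set of `x`. -/
def GreedySet (f : ℕ → X →L[ℝ] ℝ) (x : X) (Λ : Finset ℕ) : Prop :=
  ∀ n ∈ Λ, ∀ m, m ∉ Λ → |f m x| ≤ |f n x|

/-- A (biorthogonal, norm-bounded, fundamental) basis system. -/
structure BasisSystem (f : ℕ → X →L[ℝ] ℝ) (e : ℕ → X) : Prop where
  biorth : ∀ n m, f n (e m) = if n = m then (1 : ℝ) else 0
  dense : Dense (Submodule.span ℝ (Set.range e) : Set X)
  bounded : ∃ c₁ c₂ : ℝ, 0 < c₁ ∧ ∀ n, c₁ ≤ ‖e n‖ ∧ ‖e n‖ ≤ c₂ ∧ ‖f n‖ ≤ c₂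

/-- `σ̌^Λ_m(x)`: inf of `‖x - P_I x‖` over `I = ∅` or intervals `I` with
`Λ ≤ max I` and `|I| ≤ m`. -/
def checkSigma (f : ℕ → X →L[ℝ] ℝ) (e : ℕ → X) (Λ : Finset ℕ) (m : ℕ) (x : X) : ℝ :=
  sInf {r : ℝ | ∃ I : Finset ℕ,
    (I = ∅ ∨ ∃ a b : ℕ, a ≤ b ∧ I = Finset.Icc a b ∧ ∀ n ∈ Λ, n ≤ b) ∧
    I.card ≤ m ∧ r = ‖x - proj f e I x‖}

/-- `σ̂^Λ_m(x)`: inf of `‖x - P_I x‖` over `I = ∅` or intervals `I` with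
`min I ≤ Λ` and `|I| ≤ m`. -/
def hatSigma (f : ℕ → X →L[ℝ] ℝ) (e : ℕ → X) (Λ : Finset ℕ) (m : ℕ) (x : X) : ℝ :=
  sInf {r : ℝ | ∃ I : Finset ℕ,
    (I = ∅ ∨ ∃ a b : ℕ, a ≤ b ∧ I = Finset.Icc a b ∧ ∀ n ∈ Λ, a ≤ n) ∧
    I.card ≤ m ∧ r = ‖x - proj f e I x‖}

/-- `σ̃^{R,Λ}_m(x)`: inf of `‖x - P_A x‖` over `|A| ≤ m`, `A > Λ`. -/
def revSigma (f : ℕ → X →L[ℝ] ℝ) (e : ℕ → X) (Λ : Finset ℕ) (m : ℕ) (x : X) : ℝ :=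
  sInf {r : ℝ | ∃ A : Finset ℕ, A.card ≤ m ∧ (∀ n ∈ Λ, ∀ a ∈ A, n < a) ∧
    r = ‖x - proj f e A x‖}

/-- Reverse partially greedy with constant `C`. -/
def RPG (f : ℕ → X →L[ℝ] ℝ) (e : ℕ → X) (C : ℝ) : Prop :=
  ∀ (x : X) (m : ℕ) (Λ : Finset ℕ), Λ.card = m → GreedySet f x Λ →
    ‖x - proj f e Λ x‖ ≤ C * revSigma f e Λ m x

/-- `(λ, RPGII)` with constant `C`. -/
def RPGII (f : ℕ → X →L[ℝ] ℝ) (e : ℕ → X) (l C : ℝ) : Prop :=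
  ∀ (x : X) (m : ℕ) (Λ : Finset ℕ), Λ.card = ⌈l * (m : ℝ)⌉₊ → GreedySet f x Λ →
    ‖x - proj f e Λ x‖ ≤ C * checkSigma f e Λ m x

/-- Quasi-greedy with constant `C`. -/
def QG (f : ℕ → X →L[ℝ] ℝ) (e : ℕ → X) (C : ℝ) : Prop :=
  ∀ (x : X) (Λ : Finset ℕ), GreedySet f x Λ → ‖proj f e Λ x‖ ≤ C * ‖x‖

/-- Suppression quasi-greedy with constant `C`. -/
def SuppQG (f : ℕ → X →L[ℝ] ℝ) (e : ℕ → X) (C : ℝ) : Prop :=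
  ∀ (x : X) (Λ : Finset ℕ), GreedySet f x Λ → ‖x - proj f e Λ x‖ ≤ C * ‖x‖

/-- Reverse conservative with constant `C`. -/
def RevConservative (e : ℕ → X) (C : ℝ) : Prop :=
  ∀ A B : Finset ℕ, (∀ b ∈ B, ∀ a ∈ A, b < a) → A.card ≤ B.card →
    ‖∑ n ∈ A, e n‖ ≤ C * ‖∑ n ∈ B, e n‖

/-- `s(A) = max A - min A + 1` (and `s(∅) = 0`). -/
def spread (A : Finset ℕ) : ℕ :=
  if h : A.Nonempty then A.max' h - A.min' h + 1 else 0

/-- `(λ, reverse conservative of type II)` with constant `C`. -/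
def RevConsII (e : ℕ → X) (l C : ℝ) : Prop :=
  ∀ A B : Finset ℕ, (l - 1) * spread A + (A.card : ℝ) ≤ (B.card : ℝ) →
    (∀ b ∈ B, ∀ a ∈ A, b < a) → ‖∑ n ∈ A, e n‖ ≤ C * ‖∑ n ∈ B, e n‖

/-- `x` surrounds `A`: `supp x ∩ [min A, max A] = ∅` (vacuous for `A = ∅`). -/
def Surrounds (f : ℕ → X →L[ℝ] ℝ) (x : X) (A : Finset ℕ) : Prop :=
  ∀ a ∈ A, ∀ b ∈ A, ∀ n, a ≤ n → n ≤ b → f n x = 0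

/-- `(λ, RPSLC)` with constant `Δ`. -/
def RPSLC (f : ℕ → X →L[ℝ] ℝ) (e : ℕ → X) (l Δ : ℝ) : Prop :=
  ∀ x : X, (∀ n, |f n x| ≤ 1) →
    ∀ ε δ : ℕ → ℝ, (∀ n, |ε n| = 1) → (∀ n, |δ n| = 1) →
    ∀ A B : Finset ℕ, (l - 1) * spread A + (A.card : ℝ) ≤ (B.card : ℝ) →
    (∀ n ∈ B, f n x = 0) → (∀ b ∈ B, ∀ a ∈ A, b < a) → Surrounds f x A →
    ‖x + ∑ n ∈ A, ε n • e n‖ ≤ Δ * ‖x + ∑ n ∈ B, δ n • e n‖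

/-!
Fix an interval `I = [a, b]` with `Λ ≤ b` and `|I| ≤ m`, put `y = x - P_I x`, and let `α` be the
smallest modulus of a coefficient of `x` on `Λ`. Then `x - P_Λ x = z + P_{I \ Λ} x` with
`z = y - P_{Λ \ I} y`, and every coefficient of `z` and of `x` on `I \ Λ` is at most `α`. By
convexity in each coordinate `‖z + P_{I \ Λ} x‖` is bounded by `‖z + α 1_{ε(I \ Λ)}‖` for some
signs `ε`; since `I \ Λ` lies to the right of `Λ \ I` and `|Λ| ≥ λ m`, the RPSLC property bounds
this by `Δ ‖z + α 1_{δ(Λ \ I)}‖`, and the vector `z + α 1_{δ(Λ \ I)}` is the truncation `T_α y`,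
of norm at most `C_ℓ ‖y‖`.
-/

theorem norm_add_smul_le_of_mem_Icc {E : Type*} [SeminormedAddCommGroup E] [NormedSpace ℝ E]
    {u w : E} {a b t M : ℝ} (ht : t ∈ Set.Icc a b)
    (ha : ‖u + a • w‖ ≤ M) (hb : ‖u + b • w‖ ≤ M) : ‖u + t • w‖ ≤ M := by
  rw [← segment_eq_Icc (ht.1.trans ht.2)] at ht
  obtain ⟨p, q, hp, hq, hpq, rfl⟩ := ht
  have hseg : u + (p • a + q • b) • w ∈ segment ℝ (u + a • w) (u + b • w) :=
    ⟨p, q, hp, hq, hpq, by obtain rfl : q = 1 - p := by linarith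
                           simp only [smul_eq_mul]; module⟩
  simpa using (convex_closedBall (0 : E) M).segment_subset (by simpa using ha) (by simpa using hb)
    hseg

theorem norm_add_sum_smul_le_of_forall_signs {E ι : Type*} [SeminormedAddCommGroup E]
    [NormedSpace ℝ E] [DecidableEq ι] (e : ι → E) {α M : ℝ} {c : ι → ℝ} (D : Finset ι)
    (hc : ∀ n ∈ D, |c n| ≤ α) {v : E}
    (hM : ∀ ε : ι → ℝ, (∀ n, |ε n| = 1) → ‖v + α • ∑ n ∈ D, ε n • e n‖ ≤ M) :
    ‖v + ∑ n ∈ D, c n • e n‖ ≤ M := by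
  induction D using Finset.induction_on generalizing v with
  | empty => simpa using hM (fun _ => 1) (by simp)
  | insert a D ha ih =>
    have hvertex : ∀ s : ℝ, |s| = 1 → ‖(v + (α * s) • e a) + ∑ n ∈ D, c n • e n‖ ≤ M := by
      intro s hs
      refine ih (fun n hn => hc n (mem_insert_of_mem hn)) fun ε hε => ?_
      have hupd := hM (Function.update ε a s) fun n => by
        rcases eq_or_ne n a with rfl | hn
        · simpa using hs
        · simpa [Function.update_of_ne hn] using hε n
      rw [sum_insert ha, Function.update_self, sum_congr rfl fun n hn => by
        rw [Function.update_of_ne (ne_of_mem_of_not_mem hn ha)]] at hupd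
      convert hupd using 2
      module
    have hca := abs_le.mp (hc a (mem_insert_self a D))
    rw [sum_insert ha]
    convert norm_add_smul_le_of_mem_Icc (u := v + ∑ n ∈ D, c n • e n) (w := e a) hca
      (by convert hvertex (-1) (by simp) using 2; module)
      (by convert hvertex 1 (by simp) using 2; module) using 2
    abel

theorem spread_le_card_Icc {D : Finset ℕ} {a b : ℕ} (hD : D ⊆ Icc a b) :
    spread D ≤ (Icc a b).card := by
  rw [spread, Nat.card_Icc]
  split_ifs with hne
  · have hmax := mem_Icc.mp (hD (D.max'_mem hne))
    have hmin := mem_Icc.mp (hD (D.min'_mem hne))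
    omega
  · exact Nat.zero_le _

theorem sub_one_mul_spread_sdiff_add_card_le {l : ℝ} (hl : 1 ≤ l) {Λ I : Finset ℕ} {m : ℕ}
    (hΛ : l * m ≤ Λ.card) (hI : I.card ≤ m) (hD : spread (I \ Λ) ≤ I.card) :
    (l - 1) * spread (I \ Λ) + ((I \ Λ).card : ℝ) ≤ (Λ \ I).card := by
  have hI' : (I.card : ℝ) ≤ m := by exact_mod_cast hI
  have hDm : (spread (I \ Λ) : ℝ) ≤ m := by exact_mod_cast hD.trans hI
  have hIΛ : ((I \ Λ).card : ℝ) + (I ∩ Λ).card = I.card := by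
    exact_mod_cast card_sdiff_add_card_inter I Λ
  have hΛI : ((Λ \ I).card : ℝ) + (I ∩ Λ).card = Λ.card := by
    rw [inter_comm]; exact_mod_cast card_sdiff_add_card_inter Λ I
  nlinarith [mul_le_mul_of_nonneg_left hDm (sub_nonneg.2 hl)]

theorem exists_abs_eq_one_and_abs_mul_eq {ι : Type*} (c : ι → ℝ) :
    ∃ δ : ι → ℝ, (∀ n, |δ n| = 1) ∧ ∀ n, |c n| * δ n = c n := by
  refine ⟨fun n => if c n < 0 then -1 else 1, fun n => ?_, fun n => ?_⟩ <;>
    by_cases hn : c n < 0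
  · simp [hn]
  · simp [hn]
  · simp [hn, abs_of_neg hn]
  · simp [hn, abs_of_nonneg (not_lt.1 hn)]

section Greedy

variable {f : ℕ → X →L[ℝ] ℝ} {e : ℕ → X}

theorem BasisSystem.norm_pos (hb : BasisSystem f e) (n : ℕ) : 0 < ‖e n‖ := by
  obtain ⟨c₁, c₂, hc₁, hbd⟩ := hb.bounded
  exact hc₁.trans_le (hbd n).1

theorem BasisSystem.apply_sub_proj (hb : BasisSystem f e) (A : Finset ℕ) (x : X) (n : ℕ) :
    f n (x - proj f e A x) = if n ∈ A then 0 else f n x := by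
  simp only [proj, map_sub, map_sum, map_smul, hb.biorth, smul_eq_mul, mul_ite, mul_one, mul_zero,
    sum_ite_eq]
  split_ifs <;> simp

theorem proj_congr {A : Finset ℕ} {x y : X} (h : ∀ n ∈ A, f n x = f n y) :
    proj f e A x = proj f e A y :=
  sum_congr rfl fun n hn => by rw [h n hn]

theorem proj_add_proj_sdiff (A B : Finset ℕ) (x : X) :
    proj f e A x + proj f e (B \ A) x = proj f e (A ∪ B) x := by
  rw [proj, proj, proj, ← sum_union disjoint_sdiff, union_sdiff_self_eq_union]

theorem BasisSystem.sub_proj_eq_sub_proj_sdiff_add (hb : BasisSystem f e) (Λ I : Finset ℕ)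
    (x : X) : x - proj f e Λ x =
      (x - proj f e I x) - proj f e (Λ \ I) (x - proj f e I x) + proj f e (I \ Λ) x := by
  have hSy : proj f e (Λ \ I) (x - proj f e I x) = proj f e (Λ \ I) x :=
    proj_congr fun n hn => by rw [hb.apply_sub_proj, if_neg (mem_sdiff.1 hn).2]
  have hsplit : proj f e Λ x + proj f e (I \ Λ) x = proj f e I x + proj f e (Λ \ I) x := by
    rw [proj_add_proj_sdiff, proj_add_proj_sdiff, union_comm]
  rw [hSy, eq_sub_of_add_eq hsplit]
  abel

theorem surrounds_of_subset_Icc {z : X} {D : Finset ℕ} {a b : ℕ} (hD : D ⊆ Icc a b)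
    (hz : ∀ n ∈ Icc a b, f n z = 0) : Surrounds f z D := fun _ hp _ hq n hpn hnq =>
  hz n (mem_Icc.2 ⟨(mem_Icc.1 (hD hp)).1.trans hpn, hnq.trans (mem_Icc.1 (hD hq)).2⟩)

theorem GreedySet.exists_threshold {x : X} {Λ : Finset ℕ} (hgr : GreedySet f x Λ)
    (hΛ : Λ.Nonempty) : ∃ α, 0 ≤ α ∧ (∀ n ∈ Λ, α ≤ |f n x|) ∧ ∀ n ∉ Λ, |f n x| ≤ α :=
  ⟨Λ.inf' hΛ fun n => |f n x|, le_inf' _ _ fun _ _ => abs_nonneg _, fun _ hn => inf'_le _ hn,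
    fun _ hn => le_inf' _ _ fun k hk => hgr k hk _ hn⟩

theorem SuppQG.one_le {Cl : ℝ} (hb : BasisSystem f e) (hs : SuppQG f e Cl) : 1 ≤ Cl := by
  have h := hs (e 0) ∅ (by simp [GreedySet])
  simp only [proj, sum_empty, sub_zero] at h
  exact le_of_mul_le_mul_right (by simpa using h) (hb.norm_pos 0)

theorem RPSLC.one_le {l Δ : ℝ} (hb : BasisSystem f e) (h : RPSLC f e l Δ) : 1 ≤ Δ := by
  have hcoeff : ∀ n, |f n (e 0)| ≤ 1 := fun n => by rw [hb.biorth]; split_ifs <;> norm_num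
  have h0 := h (e 0) hcoeff 1 1 (by simp) (by simp) ∅ ∅ (by simp [spread]) (by simp) (by simp)
    (by simp [Surrounds])
  simp only [sum_empty, add_zero] at h0
  exact le_of_mul_le_mul_right (by simpa using h0) (hb.norm_pos 0)

/-- The truncation `T_α y`, written for a set `S` of coefficients of modulus at least `α` that
contains all those of modulus greater than `α`. -/
theorem SuppQG.norm_truncation_le {Cl : ℝ} (hs : SuppQG f e Cl) (y : X) {ε : ℕ → ℝ}
    (S : Finset ℕ) {α : ℝ} (hα : 0 ≤ α) (hS : ∀ n ∈ S, α ≤ |f n y|)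
    (hSc : ∀ n ∉ S, |f n y| ≤ α) (hε : ∀ n ∈ S, |f n y| * ε n = f n y) :
    ‖y - proj f e S y + α • ∑ n ∈ S, ε n • e n‖ ≤ Cl * ‖y‖ := by
  induction S using Finset.induction_on_min_value (fun n => |f n y|) generalizing α with
  | empty => simpa [proj] using hs y ∅ (by simp [GreedySet])
  | insert n₀ S hn₀ hmin ih =>
    -- `α ↦ T_α y` is affine on `[0, |y_{n₀}|]`; at the right end `n₀` drops out of `S`.
    have hαβ : α ≤ |f n₀ y| := hS n₀ (mem_insert_self _ _)
    have hgreedy : GreedySet f y (insert n₀ S) := fun n hn k hk => (hSc k hk).trans (hS n hn)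
    have hright := ih (abs_nonneg _) hmin (fun n hn => ?_)
      (fun n hn => hε n (mem_insert_of_mem hn))
    · refine norm_add_smul_le_of_mem_Icc ⟨hα, hαβ⟩ (by simpa using hs y _ hgreedy)
        ((congrArg _ ?_).trans_le hright)
      rw [proj, proj, sum_insert hn₀, sum_insert hn₀, smul_add, smul_smul,
        hε n₀ (mem_insert_self _ _)]
      abel
    · rcases eq_or_ne n n₀ with rfl | hne
      · exact le_rfl
      · exact (hSc n (by simp [hne, hn])).trans hαβ

theorem RPSLC.norm_add_smul_sum_le {l Δ : ℝ} (h : RPSLC f e l Δ) (hΔ : 1 ≤ Δ) {z : X} {α : ℝ}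
    (hα : 0 ≤ α) (hz : ∀ n, |f n z| ≤ α) {ε δ : ℕ → ℝ} (hε : ∀ n, |ε n| = 1)
    (hδ : ∀ n, |δ n| = 1) {A B : Finset ℕ}
    (hAB : (l - 1) * spread A + (A.card : ℝ) ≤ (B.card : ℝ)) (hB : ∀ n ∈ B, f n z = 0)
    (hBA : ∀ b ∈ B, ∀ a ∈ A, b < a) (hA : Surrounds f z A) :
    ‖z + α • ∑ n ∈ A, ε n • e n‖ ≤ Δ * ‖z + α • ∑ n ∈ B, δ n • e n‖ := by
  rcases hα.eq_or_lt with rfl | hα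
  · simpa using le_mul_of_one_le_left (norm_nonneg z) hΔ
  have hscale : ∀ s : X, z + α • s = α • (α⁻¹ • z + s) := fun s => by
    rw [smul_add, smul_inv_smul₀ hα.ne']
  have hcoeff : ∀ n, |f n (α⁻¹ • z)| ≤ 1 := fun n => by
    rw [map_smul, smul_eq_mul, abs_mul, abs_inv, abs_of_pos hα, inv_mul_le_one₀ hα]
    exact hz n
  have key := h (α⁻¹ • z) hcoeff ε δ hε hδ A B hAB (fun n hn => by simp [hB n hn]) hBA
    (fun p hp q hq n h1 h2 => by simp [hA p hp q hq n h1 h2])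
  rw [hscale, hscale, norm_smul, norm_smul, Real.norm_of_nonneg hα.le, mul_left_comm]
  exact mul_le_mul_of_nonneg_left key hα.le

theorem le_mul_checkSigma {Λ : Finset ℕ} {m : ℕ} {x : X} {C t : ℝ} (hC : 0 < C)
    (ht : ∀ I : Finset ℕ, (I = ∅ ∨ ∃ a b : ℕ, a ≤ b ∧ I = Icc a b ∧ ∀ n ∈ Λ, n ≤ b) →
      I.card ≤ m → t ≤ C * ‖x - proj f e I x‖) :
    t ≤ C * checkSigma f e Λ m x := by
  rw [← div_le_iff₀' hC]
  refine le_csInf ⟨_, ∅, Or.inl rfl, Nat.zero_le m, rfl⟩ ?_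
  rintro r ⟨I, hI, hIm, rfl⟩
  exact (div_le_iff₀' hC).2 (ht I hI hIm)

theorem lt_of_mem_sdiff_Icc {Λ : Finset ℕ} {a b s d : ℕ} (hΛb : ∀ n ∈ Λ, n ≤ b)
    (hs : s ∈ Λ \ Icc a b) (hd : d ∈ Icc a b \ Λ) : s < d := by
  obtain ⟨hsΛ, hsI⟩ := mem_sdiff.1 hs
  have hda := (mem_Icc.1 (mem_sdiff.1 hd).1).1
  have hsb := hΛb s hsΛ
  have : ¬ (a ≤ s ∧ s ≤ b) := fun h' => hsI (mem_Icc.2 h')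
  omega

theorem norm_sub_proj_le_of_threshold {l Cl Δ : ℝ} (hb : BasisSystem f e) (hl : 1 ≤ l)
    (hs : SuppQG f e Cl) (h : RPSLC f e l Δ) (hΔ : 1 ≤ Δ) {x : X} {m : ℕ} {Λ : Finset ℕ}
    (hlm : l * m ≤ Λ.card) {α : ℝ} (hα0 : 0 ≤ α) (hαΛ : ∀ n ∈ Λ, α ≤ |f n x|)
    (hαΛc : ∀ n ∉ Λ, |f n x| ≤ α) {a b : ℕ} (hΛb : ∀ n ∈ Λ, n ≤ b) (hI : (Icc a b).card ≤ m) :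
    ‖x - proj f e Λ x‖ ≤ Cl * Δ * ‖x - proj f e (Icc a b) x‖ := by
  set I := Icc a b
  set D := I \ Λ
  set S := Λ \ I
  set y := x - proj f e I x
  set z := y - proj f e S y
  have hy : ∀ n, f n y = if n ∈ I then 0 else f n x := hb.apply_sub_proj I x
  have hz : ∀ n, f n z = if n ∈ S then 0 else if n ∈ I then 0 else f n x := fun n => by
    rw [hb.apply_sub_proj, hy]
  obtain ⟨δ, hδ, hδy⟩ := exists_abs_eq_one_and_abs_mul_eq fun n => f n y
  have hrpslc : ∀ ε : ℕ → ℝ, (∀ n, |ε n| = 1) →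
      ‖z + α • ∑ n ∈ D, ε n • e n‖ ≤ Δ * ‖z + α • ∑ n ∈ S, δ n • e n‖ := by
    intro ε hε
    refine h.norm_add_smul_sum_le hΔ hα0 (fun n => ?_) hε hδ
      (sub_one_mul_spread_sdiff_add_card_le hl hlm hI (spread_le_card_Icc sdiff_subset))
      (fun n hn => by rw [hz, if_pos hn]) (fun s hs d hd => lt_of_mem_sdiff_Icc hΛb hs hd)
      (surrounds_of_subset_Icc sdiff_subset fun n (hn : n ∈ I) => by simp [hz, hn])
    · rw [hz]
      split_ifs with hnS hnI
      · simpa using hα0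
      · simpa using hα0
      · exact hαΛc n fun hn => hnS (mem_sdiff.2 ⟨hn, hnI⟩)
  have htrunc : ‖z + α • ∑ n ∈ S, δ n • e n‖ ≤ Cl * ‖y‖ := by
    refine hs.norm_truncation_le y S hα0 (fun n hn => ?_) (fun n hn => ?_) (fun n _ => hδy n)
    · rw [hy, if_neg (mem_sdiff.1 hn).2]
      exact hαΛ n (mem_sdiff.1 hn).1
    · rw [hy]
      split_ifs with hnI
      · simpa using hα0
      · exact hαΛc n fun hnΛ => hn (mem_sdiff.2 ⟨hnΛ, hnI⟩)
  calc ‖x - proj f e Λ x‖ = ‖z + proj f e D x‖ := by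
        rw [hb.sub_proj_eq_sub_proj_sdiff_add Λ I]
    _ ≤ Δ * ‖z + α • ∑ n ∈ S, δ n • e n‖ :=
      norm_add_sum_smul_le_of_forall_signs e D (fun n hn => hαΛc n (mem_sdiff.1 hn).2) hrpslc
    _ ≤ Δ * (Cl * ‖y‖) := mul_le_mul_of_nonneg_left htrunc (by linarith)
    _ = Cl * Δ * ‖y‖ := by ring

theorem norm_sub_proj_le_of_Icc {l Cl Δ : ℝ} (hb : BasisSystem f e) (hl : 1 ≤ l)
    (hs : SuppQG f e Cl) (h : RPSLC f e l Δ) (hΔ : 1 ≤ Δ) {x : X} {m : ℕ} {Λ : Finset ℕ}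
    (hΛ : Λ.card = ⌈l * (m : ℝ)⌉₊) (hgr : GreedySet f x Λ) {a b : ℕ} (hab : a ≤ b)
    (hΛb : ∀ n ∈ Λ, n ≤ b) (hI : (Icc a b).card ≤ m) :
    ‖x - proj f e Λ x‖ ≤ Cl * Δ * ‖x - proj f e (Icc a b) x‖ := by
  have hlm : l * m ≤ Λ.card := hΛ ▸ Nat.le_ceil _
  have hΛne : Λ.Nonempty := by
    have hI1 : 1 ≤ (Icc a b).card := by rw [Nat.card_Icc]; omega
    have hm : (1 : ℝ) ≤ m := by exact_mod_cast hI1.trans hI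
    rw [← card_pos, ← Nat.cast_pos (α := ℝ)]
    nlinarith
  obtain ⟨α, hα0, hαΛ, hαΛc⟩ := hgr.exists_threshold hΛne
  exact norm_sub_proj_le_of_threshold hb hl hs h hΔ hlm hα0 hαΛ hαΛc hΛb hI

end Greedy

theorem stmt_8_general (f : ℕ → X →L[ℝ] ℝ) (e : ℕ → X)
    (hb : BasisSystem f e) (l Cl Δ : ℝ) (hl : 1 ≤ l) (hs : SuppQG f e Cl)
    (h : RPSLC f e l Δ) : RPGII f e l (Cl * Δ) := by
  have hCl := hs.one_le hb
  have hΔ := h.one_le hb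
  intro x m Λ hΛ hgr
  refine le_mul_checkSigma (mul_pos (by linarith) (by linarith)) ?_
  rintro I (rfl | ⟨a, b, hab, rfl, hΛb⟩) hI
  · calc ‖x - proj f e Λ x‖ ≤ Cl * ‖x‖ := hs x Λ hgr
      _ ≤ Cl * (Δ * ‖x‖) := mul_le_mul_of_nonneg_left (le_mul_of_one_le_left (norm_nonneg x) hΔ)
          (by linarith)
      _ = Cl * Δ * ‖x - proj f e ∅ x‖ := by simp [proj, mul_assoc]
  · exact norm_sub_proj_le_of_Icc hb hl hs h hΔ hΛ hgr hab hΛb hI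

/-- suppression quasi-greedy + `Δ`-(λ, RPSLC) implies
`C_ℓ Δ`-(λ, RPGII). -/
theorem stmt_8 [CompleteSpace X] (f : ℕ → X →L[ℝ] ℝ) (e : ℕ → X)
    (hb : BasisSystem f e) (l Cl Δ : ℝ) (hl : 1 ≤ l) (hs : SuppQG f e Cl)
    (h : RPSLC f e l Δ) : RPGII f e l (Cl * Δ) :=
  stmt_8_general f e hb l Cl Δ hl hs h
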